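/- Let T be a rooted phylogenetic X-tree whose positive edge lengths satisfy the ultrametric condition, and let A ⊆ X with |A| = k. Then PD_T(A) ≤ PD(T̂_k) + k·d_{k⁻}, where d_{k⁻} is the branching distance associated with the largest branching value k⁻ ≤ k, and T̂_k is the rooted subtree of the subdivided tree T′_k consisting of all vertices at distance at most d₁ − d_{k⁻} from the root (d₁ being the common root-to-leaf distance). -/

import Mathlib

/-!
Rooted phylogenetic `X`-trees with positive edge lengths.

A tree on a finite vertex type `V` is encoded by its parent function: the root
has no parent, every other vertex has one, and iterating the parent function
reaches the root.  The edge into a non-root vertex `v` has length `len v`, and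
`hgt v` is the distance from the root to `v`.  Leaves are the vertices with no
children; the taxon set `X` of the paper is the set `leaves` of leaves.
Every non-leaf, non-root vertex has out-degree (number of children) at least 2.
-/

noncomputable section

attribute [local instance] Classical.propDecidable

structure PhyloTree (V : Type) [Fintype V] [DecidableEq V] where
  root : V
  parent : V → Option V
  len : V → ℝ
  hgt : V → ℝ
  parent_root : parent root = none
  parent_isSome : ∀ v, v ≠ root → (parent v).isSome
  reaches_root : ∀ v, Relation.ReflTransGen (fun a b => parent a = some b) v root
  hgt_root : hgt root = 0
  hgt_eq : ∀ v u, parent v = some u → hgt v = hgt u + len v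
  len_pos : ∀ v, v ≠ root → 0 < len v
  outdeg_ge_two : ∀ v, v ≠ root → (∃ u, parent u = some v) →
    2 ≤ Set.ncard {u | parent u = some v}

namespace PhyloTree

variable {V : Type} [Fintype V] [DecidableEq V]

/-- `T.step a b` : `b` is the parent of `a`. -/
def step (T : PhyloTree V) (a b : V) : Prop := T.parent a = some b

/-- `T.anc u v` : `u` is an ancestor of `v`, i.e. `u` lies on the (unique) path
from the root to `v` (reflexively). -/
def anc (T : PhyloTree V) (u v : V) : Prop := Relation.ReflTransGen T.step v u

/-- a leaf is a vertex with no children. -/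
def IsLeaf (T : PhyloTree V) (v : V) : Prop := ∀ u, T.parent u ≠ some v

/-- the leaf set (the taxon set `X`). -/
def leaves (T : PhyloTree V) : Set V := {v | T.IsLeaf v}

/-- Phylogenetic diversity of a set `Y`: the total length of all edges `e`
whose set of descendant leaves meets `Y` (the edge into a non-root vertex `v`
has length `T.len v`). -/
def PD (T : PhyloTree V) (Y : Set V) : ℝ :=
  ∑ v : V, if v ≠ T.root ∧ ∃ x ∈ Y, T.IsLeaf x ∧ T.anc v x then T.len v else 0

/-- the ultrametric condition: all leaves are at the same distance from the root. -/
def Ultrametric (T : PhyloTree V) : Prop :=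
  ∀ x y, T.IsLeaf x → T.IsLeaf y → T.hgt x = T.hgt y

/-- `R d`: the set of vertices within distance `d` above some leaf. -/
def R (T : PhyloTree V) (d : ℝ) : Set V :=
  {v | ∃ x, T.IsLeaf x ∧ T.anc v x ∧ T.hgt x - T.hgt v ≤ d}

/-- adjacency in the forest induced by `T` on a vertex set `S`. -/
def adjIn (T : PhyloTree V) (S : Set V) (u v : V) : Prop :=
  u ∈ S ∧ v ∈ S ∧ (T.parent u = some v ∨ T.parent v = some u)

/-- the connected components of the forest induced by `T` on `S`. -/
def components (T : PhyloTree V) (S : Set V) : Set (Set V) :=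
  {C | ∃ v ∈ S, C = S ∩ {u | Relation.ReflTransGen (T.adjIn S) v u}}

/-- `c d`: the number of connected components of the forest `T[R(d)]`. -/
def ccount (T : PhyloTree V) (d : ℝ) : ℕ := (T.components (T.R d)).ncard

/-- `k` is a branching value if `T[R(d)]` has exactly `k` components for some `d ≥ 0`. -/
def IsBranchingValue (T : PhyloTree V) (k : ℕ) : Prop := ∃ d : ℝ, 0 ≤ d ∧ T.ccount d = k

/-- the branching distance `d_k = min {d : c(d) = k}`. -/
def branchDist (T : PhyloTree V) (k : ℕ) : ℝ := sInf {d | 0 ≤ d ∧ T.ccount d = k}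

/-- `k⁻`: the largest branching value `≤ k`. -/
def kminus (T : PhyloTree V) (k : ℕ) : ℕ := sSup {j | j ≤ k ∧ T.IsBranchingValue j}

/-- `k⁺`: the smallest branching value `≥ k`. -/
def kplus (T : PhyloTree V) (k : ℕ) : ℕ := sInf {j | k ≤ j ∧ T.IsBranchingValue j}

/-- `A` is a size-`k` maxPD set. -/
def IsMaxPD (T : PhyloTree V) (k : ℕ) (A : Set V) : Prop :=
  A ⊆ T.leaves ∧ A.ncard = k ∧ ∀ Y ⊆ T.leaves, Y.ncard = k → T.PD Y ≤ T.PD A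

/-- `A` is a size-`k` minPD set. -/
def IsMinPD (T : PhyloTree V) (k : ℕ) (A : Set V) : Prop :=
  A ⊆ T.leaves ∧ A.ncard = k ∧ ∀ Y ⊆ T.leaves, Y.ncard = k → T.PD A ≤ T.PD Y

/-- `m T k`: the number of size-`k` maxPD sets of `T`. -/
def m (T : PhyloTree V) (k : ℕ) : ℕ := {A : Set V | T.IsMaxPD k A}.ncard

/-- `T` is binary: every non-leaf vertex has exactly two children. -/
def Binary (T : PhyloTree V) : Prop :=
  ∀ v, ¬ T.IsLeaf v → Set.ncard {u | T.parent u = some v} = 2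

end PhyloTree

namespace PhyloTree

variable {V : Type} [Fintype V] [DecidableEq V]

/-- `d₁`: the common root-to-leaf distance (for an ultrametric tree). -/
def rootLeafDist (T : PhyloTree V) : ℝ := sSup (T.hgt '' T.leaves)

/-- `PD(T̂)` where `T̂` is the subtree of the (suitably subdivided) tree
consisting of all points at distance at most `D` from the root:  each edge
`(u,v)` of `T` contributes the length of its portion lying within distance `D`
of the root, namely `min (hgt v) D - min (hgt u) D`. -/
def PDtrunc (T : PhyloTree V) (D : ℝ) : ℝ :=
  ∑ v : V, (T.parent v).elim 0 (fun u => min (T.hgt v) D - min (T.hgt u) D)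

end PhyloTree

/-!
Split every edge at height `D = d₁ - d` from the root: the part of length
`min (hgt v) D - min (hgt u) D` below `D` is counted in `PD(T̂)`, and the part
`max (hgt v) D - max (hgt u) D` above it is charged to a leaf `x ∈ A` below the edge.
The parts above `D` on the root-to-`x` path telescope to `max (hgt x) D - max 0 D ≤ d₁ - D = d`,
so the charges add up to at most `k·d`.
-/

theorem Finset.sum_biUnion_le_sum_sum {ι α β : Type*} [DecidableEq α] [AddCommMonoid β]
    [PartialOrder β] [IsOrderedAddMonoid β] (s : Finset ι) (t : ι → Finset α) {f : α → β}
    (hf : ∀ a, 0 ≤ f a) :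
    ∑ a ∈ s.biUnion t, f a ≤ ∑ i ∈ s, ∑ a ∈ t i, f a := by
  rw [← Finset.sup_eq_biUnion]
  refine Finset.apply_sup_le_sum (f := fun u => ∑ a ∈ u, f a) Finset.sum_empty
    (fun {_ _} => ?_) s
  rw [Finset.sup_eq_union, ← Finset.sum_union_inter]
  exact le_add_of_nonneg_right (Finset.sum_nonneg fun a _ => hf a)

namespace PhyloTree

variable {V : Type} [Fintype V] [DecidableEq V] (T : PhyloTree V)

def edgeIncrement (f : ℝ → ℝ) (v : V) : ℝ :=
  (T.parent v).elim 0 fun u => f (T.hgt v) - f (T.hgt u)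

def pathEdges (x : V) : Finset V := {w | T.anc w x ∧ w ≠ T.root}

variable {T}

theorem ne_root_of_step {a b : V} (h : T.step a b) : a ≠ T.root := by
  rintro rfl
  simp [step, T.parent_root] at h

theorem hgt_lt_of_step {a b : V} (h : T.step a b) : T.hgt b < T.hgt a := by
  linarith [T.hgt_eq a b h, T.len_pos a (ne_root_of_step h)]

theorem hgt_le_of_anc {u v : V} (h : T.anc u v) : T.hgt u ≤ T.hgt v := by
  induction h with
  | refl => exact le_rfl
  | tail _ hs ih => exact (hgt_lt_of_step hs).le.trans ih

theorem eq_root_of_anc_root {w : V} (h : T.anc w T.root) : w = T.root := by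
  rcases h.cases_head with h | ⟨c, hc, _⟩
  · exact h.symm
  · simp [step, T.parent_root] at hc

theorem hgt_le_rootLeafDist {x : V} (hx : T.IsLeaf x) : T.hgt x ≤ T.rootLeafDist :=
  le_csSup (Set.toFinite _).bddAbove ⟨x, hx, rfl⟩

theorem branchDist_nonneg (k : ℕ) : 0 ≤ T.branchDist k :=
  Real.sInf_nonneg fun _ hd => hd.1

theorem edgeIncrement_nonneg {f : ℝ → ℝ} (hf : Monotone f) (v : V) :
    0 ≤ T.edgeIncrement f v := by
  rcases hv : T.parent v with _ | u
  · simp [edgeIncrement, hv]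
  · simpa [edgeIncrement, hv] using hf (hgt_lt_of_step hv).le

theorem len_eq_edgeIncrement_min_add_max {v : V} (hv : v ≠ T.root) (D : ℝ) :
    T.len v = T.edgeIncrement (min · D) v + T.edgeIncrement (max · D) v := by
  obtain ⟨u, hu⟩ := Option.isSome_iff_exists.mp (T.parent_isSome v hv)
  simp only [edgeIncrement, hu, Option.elim_some]
  linarith [T.hgt_eq v u hu, min_add_max (T.hgt v) D, min_add_max (T.hgt u) D]

theorem pathEdges_root : T.pathEdges T.root = ∅ := by
  ext w
  simpa [pathEdges] using eq_root_of_anc_root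

theorem pathEdges_of_step {a c : V} (h : T.step a c) :
    T.pathEdges a = insert a (T.pathEdges c) := by
  ext w
  simp only [pathEdges, Finset.mem_filter, Finset.mem_univ, true_and, Finset.mem_insert]
  constructor
  · rintro ⟨hw, hwne⟩
    rcases hw.cases_head with rfl | ⟨e, he, hrest⟩
    · exact Or.inl rfl
    · obtain rfl : e = c := Option.some_injective _ (he.symm.trans h)
      exact Or.inr ⟨hrest, hwne⟩
  · rintro (rfl | ⟨hw, hwne⟩)
    · exact ⟨.refl, ne_root_of_step h⟩
    · exact ⟨.head h hw, hwne⟩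

theorem not_mem_pathEdges_of_step {a c : V} (h : T.step a c) : a ∉ T.pathEdges c := by
  simp only [pathEdges, Finset.mem_filter, Finset.mem_univ, true_and, not_and]
  exact fun ha _ => (hgt_lt_of_step h).not_ge (hgt_le_of_anc ha)

theorem sum_pathEdges_edgeIncrement (f : ℝ → ℝ) (x : V) :
    ∑ w ∈ T.pathEdges x, T.edgeIncrement f w = f (T.hgt x) - f (T.hgt T.root) := by
  induction T.reaches_root x using Relation.ReflTransGen.head_induction_on with
  | refl => simp [pathEdges_root]
  | @head a c hs _ ih =>
    have hpa : T.parent a = some c := hs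
    rw [pathEdges_of_step hs, Finset.sum_insert (not_mem_pathEdges_of_step hs), ih,
      edgeIncrement, hpa, Option.elim_some]
    ring

theorem PD_le_PDtrunc_add_sum_pathEdges (Y : Set V) (D : ℝ) :
    T.PD Y ≤ T.PDtrunc D + ∑ x ∈ Y.toFinset with T.IsLeaf x,
      ∑ w ∈ T.pathEdges x, T.edgeIncrement (max · D) w := by
  set E : Finset V := {v | v ≠ T.root ∧ ∃ x ∈ Y, T.IsLeaf x ∧ T.anc v x}
  have hPD : T.PD Y =
      ∑ v ∈ E, T.edgeIncrement (min · D) v + ∑ v ∈ E, T.edgeIncrement (max · D) v := by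
    rw [PD, ← Finset.sum_filter, ← Finset.sum_add_distrib]
    exact Finset.sum_congr rfl fun v hv =>
      len_eq_edgeIncrement_min_add_max (Finset.mem_filter.mp hv).2.1 D
  have hbelow : ∑ v ∈ E, T.edgeIncrement (min · D) v ≤ T.PDtrunc D :=
    Finset.sum_le_sum_of_subset_of_nonneg (Finset.subset_univ E)
      fun v _ _ => edgeIncrement_nonneg (fun _ _ h => min_le_min_right D h) v
  have hcover : E ⊆ (Y.toFinset.filter T.IsLeaf).biUnion T.pathEdges := by
    intro v hv
    obtain ⟨hvne, x, hxY, hx, hvx⟩ := (Finset.mem_filter.mp hv).2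
    exact Finset.mem_biUnion.mpr ⟨x, by simp [hxY, hx], by simp [pathEdges, hvx, hvne]⟩
  have hmax_nonneg : ∀ v, 0 ≤ T.edgeIncrement (max · D) v :=
    edgeIncrement_nonneg fun _ _ h => max_le_max_right D h
  have habove := (Finset.sum_le_sum_of_subset_of_nonneg hcover fun v _ _ => hmax_nonneg v).trans
    (Finset.sum_biUnion_le_sum_sum _ _ hmax_nonneg)
  rw [hPD]
  exact add_le_add hbelow habove

theorem sum_pathEdges_edgeIncrement_max_le {x : V} (hx : T.IsLeaf x) {d : ℝ} (hd : 0 ≤ d) :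
    ∑ w ∈ T.pathEdges x, T.edgeIncrement (max · (T.rootLeafDist - d)) w ≤ d := by
  rw [sum_pathEdges_edgeIncrement, T.hgt_root]
  have := max_le (hgt_le_rootLeafDist hx) (sub_le_self _ hd)
  linarith [le_max_right (0 : ℝ) (T.rootLeafDist - d)]

end PhyloTree

theorem pd_le_pdTop_add_k_mul_branchDist_general
    {V : Type} [Fintype V] [DecidableEq V] (T : PhyloTree V)
    (A : Set V) (k : ℕ)
    (hcard : A.ncard = k) :
    T.PD A ≤ T.PDtrunc (T.rootLeafDist - T.branchDist (T.kminus k))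
              + k * T.branchDist (T.kminus k) := by
  set d := T.branchDist (T.kminus k)
  have hd : 0 ≤ d := PhyloTree.branchDist_nonneg _
  have hleaves : (A.toFinset.filter T.IsLeaf).card ≤ k := by
    rw [← hcard, Set.ncard_eq_toFinset_card']
    exact Finset.card_filter_le _ _
  calc T.PD A
      ≤ T.PDtrunc (T.rootLeafDist - d) + ∑ x ∈ A.toFinset with T.IsLeaf x,
          ∑ w ∈ T.pathEdges x, T.edgeIncrement (max · (T.rootLeafDist - d)) w :=
        T.PD_le_PDtrunc_add_sum_pathEdges A _
    _ ≤ T.PDtrunc (T.rootLeafDist - d) + ∑ x ∈ A.toFinset with T.IsLeaf x, d := by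
        gcongr with x hx
        exact PhyloTree.sum_pathEdges_edgeIncrement_max_le (Finset.mem_filter.mp hx).2 hd
    _ ≤ T.PDtrunc (T.rootLeafDist - d) + k * d := by
        rw [Finset.sum_const, nsmul_eq_mul]
        gcongr

/-- Lemma 1 of the paper.  For an ultrametric rooted
phylogenetic tree `T` and a set `A` of `k` leaves,
`PD_T(A) ≤ PD(T̂_k) + k·d_{k⁻}`, where `T̂_k` is the part of the (subdivided)
tree within distance `d₁ − d_{k⁻}` of the root. -/
theorem pd_le_pdTop_add_k_mul_branchDist
    {V : Type} [Fintype V] [DecidableEq V] (T : PhyloTree V)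
    (hU : T.Ultrametric) (A : Set V) (hA : A ⊆ T.leaves) (k : ℕ)
    (hcard : A.ncard = k) (hk : 1 ≤ k) :
    T.PD A ≤ T.PDtrunc (T.rootLeafDist - T.branchDist (T.kminus k))
              + k * T.branchDist (T.kminus k) :=
  pd_le_pdTop_add_k_mul_branchDist_general T A k hcard
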